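/- Let | be a p-archimedean p-divisibility on a commutative ring A with ℚ ⊆ A, and define ord a := sup{m ∈ ℤ : p^m | a} ∈ ℤ ∪ {∞} and ‖a‖ = p^{−ord a}. Then for all a, b ∈ A and r ∈ ℚ: (a) ‖a+b‖ ≤ max(‖a‖,‖b‖); (b) ‖ab‖ ≤ ‖a‖·‖b‖; (c) ‖r‖ = |r|_p; (d) ‖ra‖ = |r|_p·‖a‖. -/

import Mathlib

/-!
Write `S a = {m : ℤ | p^m ∣ a}`, a nonempty initial segment of `ℤ` with
`‖a‖ = inf_{m ∈ S a} p^{-m}`. Initial segments are totally ordered by inclusion and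
`S a ∩ S b ⊆ S (a + b)`, which gives the ultrametric inequality. By Bézout and the archimedean
property, `1 ∣ q` for every rational `q` with `v_p(q) ≥ 0`; so writing `r = p^{v_p r} u` with `u`
a `p`-adic unit, multiplication by `r` shifts `S a` by exactly `v_p r`, whence
`‖r a‖ = |r|_p ‖a‖`. Axiom (6) at `a = 1` gives `S 1 = {m ≤ 0}`, i.e. `‖1‖ = 1`, and hence
`‖r‖ = |r|_p`. Finally `S (p^m b) ⊆ S (a b)` for `m ∈ S a`, so `‖a b‖ ≤ p^{-m} ‖b‖`, and taking
the infimum over `m` gives `‖a b‖ ≤ ‖a‖ ‖b‖`.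
-/

def IsDivisibility {A : Type*} [CommRing A] (D : A → A → Prop) : Prop :=
  (∀ a, D a a) ∧ (∀ a b c : A, D a b → D b c → D a c) ∧
  (∀ a b c : A, D a b → D a c → D a (b - c)) ∧
  (∀ a b c : A, D a b → D (a * c) (b * c)) ∧ ¬ D 0 1

def IsPDivisibility (p : ℕ) {A : Type*} [CommRing A] (D : A → A → Prop) : Prop :=
  IsDivisibility D ∧
  (∀ a : A, ¬ D 0 a → ¬ D ((p : A) * a) a) ∧
  (∀ a b : A, D ((p : A) * ((a ^ p * b - b ^ p * a) ^ 2 - (b ^ (p + 1)) ^ 2))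
      ((a ^ p * b - b ^ p * a) * b ^ (p + 1)))

/-- The semi-norm `‖a‖ = p^{-ord a}` where `ord a = sup {m : ℤ | p^m | a}`,
expressed as the infimum of the values `p^{-m}` over all `m` with `p^m | a`. -/
noncomputable def divNorm (p : ℕ) {A : Type*} [CommRing A] [Algebra ℚ A]
    (D : A → A → Prop) (a : A) : ℝ :=
  sInf {x : ℝ | ∃ m : ℤ, D (algebraMap ℚ A ((p : ℚ) ^ m)) a ∧ x = (p : ℝ) ^ (-m)}

namespace IsDivisibility

variable {A : Type*} [CommRing A] {D : A → A → Prop}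

theorem refl (hD : IsDivisibility D) (a : A) : D a a := hD.1 a

theorem trans (hD : IsDivisibility D) {a b c : A} : D a b → D b c → D a c := hD.2.1 a b c

theorem sub (hD : IsDivisibility D) {x a b : A} : D x a → D x b → D x (a - b) := hD.2.2.1 x a b

theorem mul_right (hD : IsDivisibility D) {a b : A} (h : D a b) (c : A) : D (a * c) (b * c) :=
  hD.2.2.2.1 a b c h

theorem not_zero_one (hD : IsDivisibility D) : ¬ D 0 1 := hD.2.2.2.2

theorem zero_right (hD : IsDivisibility D) (x : A) : D x 0 := by
  simpa using hD.sub (hD.refl x) (hD.refl x)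

theorem neg (hD : IsDivisibility D) {x a : A} (h : D x a) : D x (-a) := by
  simpa using hD.sub (hD.zero_right x) h

theorem add (hD : IsDivisibility D) {x a b : A} (ha : D x a) (hb : D x b) : D x (a + b) := by
  simpa using hD.sub ha (hD.neg hb)

theorem intCast_mul (hD : IsDivisibility D) {x a : A} (h : D x a) (n : ℤ) : D x (n * a) := by
  induction n using Int.induction_on with
  | zero => simpa using hD.zero_right x
  | succ k ih => simpa [add_mul] using hD.add ih h
  | pred k ih => simpa [sub_mul] using hD.sub ih h

theorem dvd_mul_of_one_dvd (hD : IsDivisibility D) {c : A} (h : D 1 c) (x : A) : D x (x * c) := by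
  simpa [mul_comm x] using hD.mul_right h x

theorem mul_right_iff (hD : IsDivisibility D) {a b c c' : A} (hc : c * c' = 1) :
    D (a * c) (b * c) ↔ D a b := by
  refine ⟨fun h => ?_, fun h => hD.mul_right h c⟩
  simpa [mul_assoc, hc] using hD.mul_right h c'

theorem mul_left_iff_of_one_dvd (hD : IsDivisibility D) {a b c c' : A} (hc : c * c' = 1)
    (h : D 1 c) (h' : D 1 c') : D (a * c) b ↔ D a b := by
  have hac : D (a * c) a := by simpa [mul_assoc, hc] using hD.dvd_mul_of_one_dvd h' (a * c)
  exact ⟨hD.trans (hD.dvd_mul_of_one_dvd h a), hD.trans hac⟩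

end IsDivisibility

theorem not_dvd_den_of_padicValRat_nonneg {p : ℕ} [Fact p.Prime] {q : ℚ}
    (hq : 0 ≤ padicValRat p q) : ¬ p ∣ q.den := by
  intro hden
  have hnum : ¬ (p : ℤ) ∣ q.num := fun hnum =>
    (Fact.out : p.Prime).one_lt.ne'
      (Nat.eq_one_of_dvd_coprimes q.reduced (Int.natCast_dvd.1 hnum) hden)
  have := one_le_padicValNat_of_dvd q.den_ne_zero hden
  rw [padicValRat_def, padicValInt.eq_zero_of_not_dvd hnum] at hq
  omega

section

variable {p : ℕ} {A : Type*} [CommRing A] [Algebra ℚ A] {D : A → A → Prop}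

theorem IsDivisibility.pow_dvd_pow (hD : IsDivisibility D) (hp : p ≠ 0) {m n : ℤ} (h : m ≤ n) :
    D (algebraMap ℚ A ((p : ℚ) ^ m)) (algebraMap ℚ A ((p : ℚ) ^ n)) := by
  have hpow : (p : ℚ) ^ n = (((p : ℤ) ^ (n - m).toNat : ℤ) : ℚ) * (p : ℚ) ^ m := by
    rw [Int.cast_pow, Int.cast_natCast, ← zpow_natCast, ← zpow_add₀ (by exact_mod_cast hp)]
    congr 1
    omega
  rw [hpow, map_mul, map_intCast]
  exact hD.intCast_mul (hD.refl _) _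

theorem IsDivisibility.one_dvd_algebraMap [Fact p.Prime] (hD : IsDivisibility D)
    (harch : ∀ a : A, ∃ m : ℤ, D (algebraMap ℚ A ((p : ℚ) ^ m)) a) {q : ℚ}
    (hq : 0 ≤ padicValRat p q) : D 1 (algebraMap ℚ A q) := by
  have hp : p.Prime := Fact.out
  obtain ⟨m, hm⟩ := harch (algebraMap ℚ A (q.den : ℚ)⁻¹)
  set N := (-m).toNat
  obtain ⟨x, y, hxy⟩ : IsCoprime (q.den : ℤ) ((p : ℤ) ^ N) := by
    rw [← Nat.cast_pow, Nat.isCoprime_iff_coprime]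
    exact (hp.coprime_iff_not_dvd.2 (not_dvd_den_of_padicValRat_nonneg hq)).symm.pow_right N
  have hpN : D 1 (algebraMap ℚ A ((p : ℚ) ^ (N : ℤ)) * algebraMap ℚ A (q.den : ℚ)⁻¹) := by
    have h := hD.mul_right hm (algebraMap ℚ A ((p : ℚ) ^ (N : ℤ)))
    rw [← map_mul, ← zpow_add₀ (by exact_mod_cast hp.ne_zero), mul_comm] at h
    simpa using hD.trans (hD.pow_dvd_pow hp.ne_zero (show (0 : ℤ) ≤ m + N by omega)) h
  have hden : (q.den : ℚ)⁻¹ = x * 1 + y * ((p : ℚ) ^ (N : ℤ) * (q.den : ℚ)⁻¹) := by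
    have hxy' : (x : ℚ) * q.den + y * (p : ℚ) ^ N = 1 := by exact_mod_cast hxy
    rw [zpow_natCast]
    field_simp
    linear_combination -hxy'
  have hinv : D 1 (algebraMap ℚ A (q.den : ℚ)⁻¹) := by
    rw [hden, map_add, map_mul, map_mul, map_intCast, map_intCast, map_one, map_mul]
    exact hD.add (hD.intCast_mul (hD.refl 1) x) (hD.intCast_mul hpN y)
  rw [← q.num_div_den, div_eq_mul_inv, map_mul, map_intCast]
  exact hD.intCast_mul hinv _

theorem IsDivisibility.pow_dvd_mul_iff [Fact p.Prime] (hD : IsDivisibility D)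
    (harch : ∀ a : A, ∃ m : ℤ, D (algebraMap ℚ A ((p : ℚ) ^ m)) a) {r : ℚ} (hr : r ≠ 0)
    (a : A) (m : ℤ) :
    D (algebraMap ℚ A ((p : ℚ) ^ m)) (algebraMap ℚ A r * a) ↔
      D (algebraMap ℚ A ((p : ℚ) ^ (m - padicValRat p r))) a := by
  have hp : (p : ℚ) ≠ 0 := by exact_mod_cast (Fact.out : p.Prime).ne_zero
  set v := padicValRat p r
  set u := r * (p : ℚ) ^ (-v)
  have hu : padicValRat p u = 0 := by
    rw [padicValRat.mul hr (zpow_ne_zero _ hp), padicValRat.zpow,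
      padicValRat.self (Fact.out : p.Prime).one_lt]
    ring
  have hunit : algebraMap ℚ A u * algebraMap ℚ A u⁻¹ = 1 := by
    rw [← map_mul, mul_inv_cancel₀ (by positivity), map_one]
  have hpu : (p : ℚ) ^ m * u = (p : ℚ) ^ (m - v) * r := by
    rw [zpow_sub₀ hp, div_eq_mul_inv, ← zpow_neg]
    ring
  calc D (algebraMap ℚ A ((p : ℚ) ^ m)) (algebraMap ℚ A r * a)
      ↔ D (algebraMap ℚ A ((p : ℚ) ^ m) * algebraMap ℚ A u) (algebraMap ℚ A r * a) :=
        (hD.mul_left_iff_of_one_dvd hunit (hD.one_dvd_algebraMap harch hu.ge)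
          (hD.one_dvd_algebraMap harch (by rw [padicValRat.inv, hu]; rfl))).symm
    _ ↔ D (algebraMap ℚ A ((p : ℚ) ^ (m - v)) * algebraMap ℚ A r) (a * algebraMap ℚ A r) := by
        rw [← map_mul, hpu, map_mul, mul_comm a]
    _ ↔ D (algebraMap ℚ A ((p : ℚ) ^ (m - v))) a :=
        hD.mul_right_iff (c' := algebraMap ℚ A r⁻¹)
          (by rw [← map_mul, mul_inv_cancel₀ hr, map_one])

theorem IsPDivisibility.pow_dvd_one_iff (hD : IsPDivisibility p D) (hp : p ≠ 0) {m : ℤ} :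
    D (algebraMap ℚ A ((p : ℚ) ^ m)) 1 ↔ m ≤ 0 := by
  refine ⟨fun h => ?_, fun h => by simpa using hD.1.pow_dvd_pow hp h⟩
  by_contra! hm
  have hp1 : D ((p : A) * 1) 1 := by
    simpa using hD.1.trans (hD.1.pow_dvd_pow hp (show (1 : ℤ) ≤ m by omega)) h
  exact hD.2.1 1 hD.1.not_zero_one hp1

theorem divNorm_nonneg (a : A) : 0 ≤ divNorm p D a :=
  Real.sInf_nonneg (by rintro _ ⟨m, -, rfl⟩; positivity)

theorem divNorm_le {a : A} {m : ℤ} (h : D (algebraMap ℚ A ((p : ℚ) ^ m)) a) :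
    divNorm p D a ≤ (p : ℝ) ^ (-m) :=
  csInf_le ⟨0, by rintro _ ⟨n, -, rfl⟩; positivity⟩ ⟨m, h, rfl⟩

theorem le_mul_divNorm {a : A} {c x : ℝ} (hc : 0 ≤ c)
    (ha : ∃ m : ℤ, D (algebraMap ℚ A ((p : ℚ) ^ m)) a)
    (h : ∀ m : ℤ, D (algebraMap ℚ A ((p : ℚ) ^ m)) a → x ≤ c * (p : ℝ) ^ (-m)) :
    x ≤ c * divNorm p D a := by
  obtain ⟨m₀, hm₀⟩ := ha
  rw [divNorm, ← smul_eq_mul, ← Real.sInf_smul_of_nonneg hc]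
  refine le_csInf (Set.Nonempty.smul_set ⟨_, m₀, hm₀, rfl⟩) ?_
  rintro _ ⟨_, ⟨m, hm, rfl⟩, rfl⟩
  exact h m hm

theorem divNorm_le_divNorm {a b : A} (ha : ∃ m : ℤ, D (algebraMap ℚ A ((p : ℚ) ^ m)) a)
    (h : ∀ m : ℤ, D (algebraMap ℚ A ((p : ℚ) ^ m)) a → D (algebraMap ℚ A ((p : ℚ) ^ m)) b) :
    divNorm p D b ≤ divNorm p D a := by
  simpa using le_mul_divNorm zero_le_one ha fun m hm => by simpa using divNorm_le (h m hm)

theorem divNorm_eq_zpow_mul (hp : p ≠ 0) {a b : A} (k : ℤ)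
    (h : ∀ m : ℤ, D (algebraMap ℚ A ((p : ℚ) ^ m)) b ↔
      D (algebraMap ℚ A ((p : ℚ) ^ (m - k))) a) :
    divNorm p D b = (p : ℝ) ^ (-k) * divNorm p D a := by
  rw [divNorm, divNorm, ← smul_eq_mul, ← Real.sInf_smul_of_nonneg (by positivity)]
  congr 1
  ext x
  simp only [Set.mem_ofPred_eq, Set.mem_smul_set, smul_eq_mul]
  have hpk (m : ℤ) : (p : ℝ) ^ (-k) * (p : ℝ) ^ (-(m - k)) = (p : ℝ) ^ (-m) := by
    rw [← zpow_add₀ (by exact_mod_cast hp)]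
    ring_nf
  constructor
  · rintro ⟨m, hm, rfl⟩
    exact ⟨_, ⟨m - k, (h m).1 hm, rfl⟩, hpk m⟩
  · rintro ⟨_, ⟨n, hn, rfl⟩, rfl⟩
    exact ⟨n + k, (h _).2 (by simpa using hn), by simpa using hpk (n + k)⟩

theorem IsDivisibility.divNorm_zero (hD : IsDivisibility D) (hp : 1 < p) :
    divNorm p D (0 : A) = 0 := by
  -- `S 0 = ℤ` is invariant under the shift by one, so `‖0‖ = p⁻¹ ‖0‖`.
  have hfix := divNorm_eq_zpow_mul (p := p) (a := (0 : A)) (b := 0) (by omega) 1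
    fun _ => iff_of_true (hD.zero_right _) (hD.zero_right _)
  have hp1 : (p : ℝ) ^ (-1 : ℤ) < 1 := by
    rw [zpow_neg_one]
    exact inv_lt_one_of_one_lt₀ (by exact_mod_cast hp)
  nlinarith [divNorm_nonneg (p := p) (D := D) (0 : A)]

theorem IsPDivisibility.divNorm_one (hD : IsPDivisibility p D) (hp : p ≠ 0) :
    divNorm p D (1 : A) = 1 := by
  have h0 : D (algebraMap ℚ A ((p : ℚ) ^ (0 : ℤ))) 1 := by simpa using hD.1.refl 1
  refine le_antisymm (by simpa using divNorm_le h0) ?_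
  simpa using le_mul_divNorm zero_le_one ⟨0, h0⟩ fun m hm => by
    simpa using one_le_zpow₀ (by exact_mod_cast Nat.one_le_iff_ne_zero.2 hp : (1 : ℝ) ≤ p)
      (neg_nonneg.2 ((hD.pow_dvd_one_iff hp).1 hm))

theorem IsDivisibility.divNorm_algebraMap_mul [Fact p.Prime] (hD : IsDivisibility D)
    (harch : ∀ a : A, ∃ m : ℤ, D (algebraMap ℚ A ((p : ℚ) ^ m)) a) (r : ℚ) (a : A) :
    divNorm p D (algebraMap ℚ A r * a) = ((padicNorm p r : ℚ) : ℝ) * divNorm p D a := by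
  rcases eq_or_ne r 0 with rfl | hr
  · simp [hD.divNorm_zero (Fact.out : p.Prime).one_lt]
  rw [divNorm_eq_zpow_mul (Fact.out : p.Prime).ne_zero _ (hD.pow_dvd_mul_iff harch hr a),
    padicNorm.eq_zpow_of_nonzero hr, Rat.cast_zpow, Rat.cast_natCast]

theorem IsDivisibility.divNorm_add_le (hD : IsDivisibility D) (hp : p ≠ 0)
    (harch : ∀ a : A, ∃ m : ℤ, D (algebraMap ℚ A ((p : ℚ) ^ m)) a) (a b : A) :
    divNorm p D (a + b) ≤ max (divNorm p D a) (divNorm p D b) := by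
  by_cases hab : ∀ m : ℤ, D (algebraMap ℚ A ((p : ℚ) ^ m)) a →
      D (algebraMap ℚ A ((p : ℚ) ^ m)) b
  · exact (divNorm_le_divNorm (harch a) fun m hm => hD.add hm (hab m hm)).trans (le_max_left _ _)
  push Not at hab
  obtain ⟨m, hma, hmb⟩ := hab
  have hba (n : ℤ) (hn : D (algebraMap ℚ A ((p : ℚ) ^ n)) b) :
      D (algebraMap ℚ A ((p : ℚ) ^ n)) a := by
    have hnm : n ≤ m := by
      by_contra! hmn
      exact hmb (hD.trans (hD.pow_dvd_pow hp hmn.le) hn)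
    exact hD.trans (hD.pow_dvd_pow hp hnm) hma
  exact (divNorm_le_divNorm (harch b) fun n hn => hD.add (hba n hn) hn).trans (le_max_right _ _)

theorem IsDivisibility.divNorm_mul_le [Fact p.Prime] (hD : IsDivisibility D)
    (harch : ∀ a : A, ∃ m : ℤ, D (algebraMap ℚ A ((p : ℚ) ^ m)) a) (a b : A) :
    divNorm p D (a * b) ≤ divNorm p D a * divNorm p D b := by
  have hp := (Fact.out : p.Prime)
  rw [mul_comm (divNorm p D a)]
  refine le_mul_divNorm (divNorm_nonneg b) (harch a) fun m hm => ?_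
  have hval : padicValRat p ((p : ℚ) ^ m) = m := by
    rw [padicValRat.zpow, padicValRat.self hp.one_lt, mul_one]
  have hshift := divNorm_eq_zpow_mul hp.ne_zero _
    (hD.pow_dvd_mul_iff harch (zpow_ne_zero m (Nat.cast_ne_zero.2 hp.ne_zero)) b)
  rw [hval] at hshift
  rw [mul_comm (divNorm p D b), ← hshift]
  exact divNorm_le_divNorm (harch _) fun n hn => hD.trans hn (hD.mul_right hm b)

end

theorem stmt_15 (p : ℕ) (hp : p.Prime) {A : Type*} [CommRing A] [Algebra ℚ A]
    (D : A → A → Prop) (hD : IsPDivisibility p D)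
    (harch : ∀ a : A, ∃ m : ℤ, D (algebraMap ℚ A ((p : ℚ) ^ m)) a) :
    (∀ a b : A, divNorm p D (a + b) ≤ max (divNorm p D a) (divNorm p D b)) ∧
    (∀ a b : A, divNorm p D (a * b) ≤ divNorm p D a * divNorm p D b) ∧
    (∀ r : ℚ, divNorm p D (algebraMap ℚ A r) = ((padicNorm p r : ℚ) : ℝ)) ∧
    (∀ (r : ℚ) (a : A),
      divNorm p D (algebraMap ℚ A r * a) = ((padicNorm p r : ℚ) : ℝ) * divNorm p D a) := by
  have : Fact p.Prime := ⟨hp⟩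
  refine ⟨hD.1.divNorm_add_le hp.ne_zero harch, hD.1.divNorm_mul_le harch, fun r => ?_,
    hD.1.divNorm_algebraMap_mul harch⟩
  simpa [hD.divNorm_one hp.ne_zero] using hD.1.divNorm_algebraMap_mul harch r 1
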